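/- arXiv:math/0606614 — 10 statements merged into one kernel-verified Lean document; each statement's English description precedes it below -/
import Mathlib

section
/- Product formula for evaluation in skew polynomial rings: let K be a division ring, S an endomorphism of K, D an S-derivation, and R = K[t;S,D] the skew polynomial ring with commutation rule t·a = S(a)·t + D(a). For f ∈ R and a ∈ K let f(a) denote the unique element of K such that f − f(a) ∈ R·(t−a). Then for all f, g ∈ R and a ∈ K: if g(a) = 0 then (fg)(a) = 0, and if g(a) ≠ 0 then (fg)(a) = f(a^{g(a)})·g(a), where a^c := S(c)ac⁻¹ + D(c)c⁻¹. -/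
/-- The `(S,D)`-conjugate `a^c := S(c)·a·c⁻¹ + D(c)·c⁻¹`. -/
def sdConj {K : Type*} [DivisionRing K] (S : K →+* K) (D : K →+ K) (a c : K) : K :=
  S c * a * c⁻¹ + D c * c⁻¹

/-- `R` together with `ι : K →+* R` and `t : R` is the skew polynomial ring `K[t;S,D]`:
the commutation rule `t·a = S(a)t + D(a)` holds and every element of `R` is uniquely a
polynomial `Σ ι(cᵢ)·tⁱ`. -/
def IsSkewPolyRing {K R : Type*} [DivisionRing K] [Ring R] (S : K →+* K) (D : K →+ K)
    (ι : K →+* R) (t : R) : Prop :=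
  (∀ a : K, t * ι a = ι (S a) * t + ι (D a)) ∧
  (∀ r : R, ∃! c : ℕ →₀ K, r = c.sum fun i k => ι k * t ^ i)

/-- The coefficients of `r ∈ K[t;S,D]`. -/
noncomputable def coeffs {K R : Type*} [DivisionRing K] [Ring R] {S : K →+* K} {D : K →+ K}
    {ι : K →+* R} {t : R} (h : IsSkewPolyRing S D ι t) (r : R) : ℕ →₀ K :=
  (h.2 r).choose

/-- The degree of `r ∈ K[t;S,D]` (with `deg 0 = 0`). -/
noncomputable def sdeg {K R : Type*} [DivisionRing K] [Ring R] {S : K →+* K} {D : K →+ K}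
    {ι : K →+* R} {t : R} (h : IsSkewPolyRing S D ι t) (r : R) : ℕ :=
  (coeffs h r).support.sup id

/-- `r ∈ K[t;S,D]` is monic: its leading coefficient is `1`. -/
noncomputable def SMonic {K R : Type*} [DivisionRing K] [Ring R] {S : K →+* K} {D : K →+ K}
    {ι : K →+* R} {t : R} (h : IsSkewPolyRing S D ι t) (r : R) : Prop :=
  coeffs h r (sdeg h r) = 1

section Aux

variable {K R : Type*} [DivisionRing K] [Ring R] {S : K →+* K} {D : K →+ K}
    {ι : K →+* R} {t : R}

private lemma rep_unique (h : IsSkewPolyRing S D ι t) {c d : ℕ →₀ K}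
    (hcd : (c.sum fun i k => ι k * t ^ i) = (d.sum fun i k => ι k * t ^ i)) : c = d := by
  obtain ⟨e, -, hu⟩ := h.2 (c.sum fun i k => ι k * t ^ i)
  exact (hu c rfl).trans (hu d hcd).symm

/-- `r` has a polynomial representation of degree at most `n`. -/
private def DegLe (ι : K →+* R) (t : R) (n : ℕ) (r : R) : Prop :=
  ∃ c : ℕ →₀ K, (∀ j, n < j → c j = 0) ∧ r = c.sum fun i k => ι k * t ^ i

private lemma degle_zero {n : ℕ} : DegLe ι t n (0 : R) :=
  ⟨0, by simp, by simp⟩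

private lemma degle_monomial {m n : ℕ} (hmn : m ≤ n) (b : K) :
    DegLe ι t n (ι b * t ^ m) := by
  refine ⟨Finsupp.single m b, fun j hj => Finsupp.single_eq_of_ne (by omega), ?_⟩
  rw [Finsupp.sum_single_index (by simp)]

private lemma degle_add {n : ℕ} {r r' : R} (hr : DegLe ι t n r) (hr' : DegLe ι t n r') :
    DegLe ι t n (r + r') := by
  obtain ⟨c, hc, rfl⟩ := hr
  obtain ⟨c', hc', rfl⟩ := hr'
  refine ⟨c + c', fun j hj => by simp [hc j hj, hc' j hj], ?_⟩
  rw [Finsupp.sum_add_index' (by simp) (by intros; simp [map_add, add_mul])]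

private lemma degle_const_mul {n : ℕ} {r : R} (k : K) (hr : DegLe ι t n r) :
    DegLe ι t n (ι k * r) := by
  obtain ⟨c, hc, rfl⟩ := hr
  refine ⟨c.mapRange (k * ·) (mul_zero k), fun j hj => by simp [hc j hj], ?_⟩
  rw [Finsupp.sum_mapRange_index (by simp), Finsupp.mul_sum]
  exact Finsupp.sum_congr fun i _ => by rw [map_mul, mul_assoc]

private lemma degle_mul_t {n : ℕ} {r : R} (hr : DegLe ι t n r) :
    DegLe ι t (n + 1) (r * t) := by
  obtain ⟨c, hc, rfl⟩ := hr
  refine ⟨c.mapDomain Nat.succ, ?_, ?_⟩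
  · intro j hj
    by_contra hne
    have hmem : j ∈ (c.mapDomain Nat.succ).support := Finsupp.mem_support_iff.2 hne
    obtain ⟨i, hi, rfl⟩ := Finset.mem_image.1 (Finsupp.mapDomain_support hmem)
    have hci : c i ≠ 0 := Finsupp.mem_support_iff.1 hi
    have : ¬ n < i := fun hni => hci (hc i hni)
    omega
  · rw [Finsupp.sum_mapDomain_index (by simp) (by intros; simp [map_add, add_mul]),
      Finsupp.sum_mul]
    exact Finsupp.sum_congr fun i _ => by rw [mul_assoc, ← pow_succ]

private lemma degle_mono {n m : ℕ} {r : R} (hnm : n ≤ m) (hr : DegLe ι t n r) :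
    DegLe ι t m r := by
  obtain ⟨c, hc, rfl⟩ := hr
  exact ⟨c, fun j hj => hc j (lt_of_le_of_lt hnm hj), rfl⟩

private lemma degle_sum {α : Type*} {s : Finset α} {f : α → R} {n : ℕ}
    (hf : ∀ i ∈ s, DegLe ι t n (f i)) : DegLe ι t n (∑ i ∈ s, f i) :=
  Finset.sum_induction f (DegLe ι t n) (fun _ _ => degle_add) degle_zero hf

private lemma degle_t_pow (h : IsSkewPolyRing S D ι t) :
    ∀ (m : ℕ) (b : K), DegLe ι t m (t ^ m * ι b) := by
  intro m
  induction m with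
  | zero =>
    intro b
    have : t ^ 0 * ι b = ι b * t ^ 0 := by simp
    rw [this]
    exact degle_monomial le_rfl b
  | succ m ih =>
    intro b
    have : t ^ (m + 1) * ι b = (t ^ m * ι (S b)) * t + t ^ m * ι (D b) := by
      rw [pow_succ, mul_assoc, h.1 b, mul_add, ← mul_assoc]
    rw [this]
    exact degle_add (degle_mul_t (ih (S b))) (degle_mono (Nat.le_succ m) (ih (D b)))

private lemma iota_inj (h : IsSkewPolyRing S D ι t) : Function.Injective ι := by
  intro x y hxy
  have hx : ι x = (Finsupp.single 0 x).sum fun i k => ι k * t ^ i := by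
    rw [Finsupp.sum_single_index (by simp)]; simp
  have hy : ι y = (Finsupp.single 0 y).sum fun i k => ι k * t ^ i := by
    rw [Finsupp.sum_single_index (by simp)]; simp
  have hrep := rep_unique h (hx.symm.trans (hxy.trans hy))
  simpa using DFunLike.congr_fun hrep 0

/-- The only constant in the left ideal `R·(t - ι a)` is `0`. -/
private lemma const_eval (h : IsSkewPolyRing S D ι t) {a c : K}
    (hmem : ι c ∈ Ideal.span {t - ι a}) : c = 0 := by
  rw [Ideal.mem_span_singleton'] at hmem
  obtain ⟨q, hq⟩ := hmem
  obtain ⟨cq, hcq, -⟩ := h.2 q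
  by_cases h0 : cq = 0
  · have hq0 : q = 0 := by rw [hcq, h0]; simp
    have : ι c = ι 0 := by rw [map_zero, ← hq, hq0, zero_mul]
    exact iota_inj h this
  · exfalso
    have hsupp : cq.support.Nonempty := Finsupp.support_nonempty_iff.2 h0
    set d := cq.support.max' hsupp with hd
    have hdne : cq d ≠ 0 := Finsupp.mem_support_iff.1 (cq.support.max'_mem hsupp)
    have hqa : DegLe ι t d (q * ι a) := by
      rw [hcq, Finsupp.sum_mul, Finsupp.sum]
      refine degle_sum fun i hi => ?_
      refine degle_mono (cq.support.le_max' i hi) ?_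
      rw [mul_assoc]
      exact degle_const_mul _ (degle_t_pow h i a)
    have hLHS : DegLe ι t d (ι c + q * ι a) := by
      refine degle_add (degle_mono (Nat.zero_le d) ?_) hqa
      have : ι c = ι c * t ^ 0 := by simp
      rw [this]
      exact degle_monomial le_rfl c
    have heq : ι c + q * ι a = q * t := by
      rw [← hq, mul_sub, sub_add_cancel]
    have hRHS : q * t = (cq.mapDomain Nat.succ).sum fun i k => ι k * t ^ i := by
      rw [Finsupp.sum_mapDomain_index (by simp) (by intros; simp [map_add, add_mul]),
        hcq, Finsupp.sum_mul]
      exact Finsupp.sum_congr fun i _ => by rw [mul_assoc, ← pow_succ]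
    obtain ⟨cl, hcl, hcls⟩ := hLHS
    have heq2 : cl = cq.mapDomain Nat.succ := rep_unique h (by rw [← hcls, heq, hRHS])
    have h1 : cl (d + 1) = 0 := hcl _ (Nat.lt_succ_self d)
    have h2 : (cq.mapDomain Nat.succ) (d + 1) = cq d :=
      Finsupp.mapDomain_apply Nat.succ_injective cq d
    exact hdne (by rw [← h2, ← heq2]; exact h1)

end Aux

/-- Product formula: if `g(a)` and `(fg)(a)` are the right evaluations (remainders upon
right division by `t − a`), then `(fg)(a) = 0` when `g(a) = 0`, and
`(fg)(a) = f(a^{g(a)})·g(a)` when `g(a) ≠ 0`. -/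
theorem product_formula {K R : Type*} [DivisionRing K] [Ring R] (S : K →+* K) (D : K →+ K)
    (hD : ∀ a b : K, D (a * b) = S a * D b + D a * b)
    (ι : K →+* R) (t : R) (h : IsSkewPolyRing S D ι t)
    (f g : R) (a : K) (evg evfg : K)
    (hg : g - ι evg ∈ Ideal.span {t - ι a})
    (hfg : f * g - ι evfg ∈ Ideal.span {t - ι a}) :
    (evg = 0 → evfg = 0) ∧
    (evg ≠ 0 → ∀ evf : K,
      f - ι evf ∈ Ideal.span {t - ι (sdConj S D a evg)} → evfg = evf * evg) := by
  set I := Ideal.span {t - ι a} with hI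
  constructor
  · intro h0
    have hgI : g ∈ I := by simpa [h0] using hg
    have hfgI : f * g ∈ I := Ideal.mul_mem_left I f hgI
    have hcI : ι evfg ∈ I := by
      have := Ideal.sub_mem I hfgI hfg
      simpa using this
    exact const_eval h hcI
  · intro hc evf hf
    have htma : t - ι a ∈ I := Ideal.subset_span rfl
    have hbc : sdConj S D a evg * evg = S evg * a + D evg := by
      simp [sdConj, add_mul, mul_assoc, inv_mul_cancel₀ hc]
    have key : (t - ι (sdConj S D a evg)) * ι evg = ι (S evg) * (t - ι a) := by
      rw [sub_mul, h.1 evg, ← map_mul, hbc, map_add, map_mul, mul_sub]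
      abel
    have h1 : (t - ι (sdConj S D a evg)) * ι evg ∈ I := by
      rw [key]; exact Ideal.mul_mem_left I _ htma
    have h2 : (t - ι (sdConj S D a evg)) * g ∈ I := by
      have he : (t - ι (sdConj S D a evg)) * g
          = (t - ι (sdConj S D a evg)) * (g - ι evg) + (t - ι (sdConj S D a evg)) * ι evg := by
        rw [mul_sub, sub_add_cancel]
      rw [he]
      exact Ideal.add_mem I (Ideal.mul_mem_left I _ hg) h1
    obtain ⟨q, hq⟩ := Ideal.mem_span_singleton'.1 hf
    have h3 : (f - ι evf) * g ∈ I := by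
      rw [← hq, mul_assoc]
      exact Ideal.mul_mem_left I q h2
    have h4 : f * g - ι (evf * evg) ∈ I := by
      have he : f * g - ι (evf * evg) = (f - ι evf) * g + ι evf * (g - ι evg) := by
        rw [map_mul]; noncomm_ring
      rw [he]
      exact Ideal.add_mem I h3 (Ideal.mul_mem_left I _ hg)
    have h5 : ι (evfg - evf * evg) ∈ I := by
      rw [map_sub]
      have h6 := Ideal.sub_mem I h4 hfg
      rwa [sub_sub_sub_cancel_left] at h6
    exact sub_eq_zero.1 (const_eval h h5)
end

section
/- In the skew polynomial ring R = K[t;S,D] over a division ring K, for any f ∈ R and a ∈ K: if f(a) = 0 then f itself is a least left common multiple of f and t−a; and if f(a) ≠ 0 then (t − a^{f(a)})·f is a least left common multiple of f and t−a, i.e. R·f ∩ R·(t−a) = R·(t − a^{f(a)})·f. -/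
/-!
Right division by `t - a` leaves a constant remainder, so with `c = f(a) ≠ 0` any
`p = q·(t - a^c) + r` gives `p·f = q·(t - a^c)·f + r·f`. The identity
`(t - a^c)·c = S(c)·(t - a)` puts `(t - a^c)·f` into `R·(t - a)`, so `p·f ∈ R·(t - a)`
forces `r·c ∈ R·(t - a)`. Comparing leading coefficients, no nonzero constant is a left
multiple of `t - a`; hence `r = 0`.
-/

theorem sub_sdConj_mul {K R : Type*} [DivisionRing K] [Ring R] {S : K →+* K} {D : K →+ K}
    {ι : K →+* R} {t : R} (ht : ∀ k : K, t * ι k = ι (S k) * t + ι (D k)) (a : K) {c : K}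
    (hc : c ≠ 0) : (t - ι (sdConj S D a c)) * ι c = ι (S c) * (t - ι a) := by
  have hconj : sdConj S D a c * c = S c * a + D c := by
    simp [sdConj, add_mul, mul_assoc, inv_mul_cancel₀ hc]
  rw [sub_mul, ht, ← map_mul, hconj, map_add, mul_sub, ← map_mul]
  abel

section OfCoeffs

variable {K R : Type*} [Semiring K] [Semiring R]

noncomputable def ofCoeffs (ι : K →+* R) (t : R) (c : ℕ →₀ K) : R :=
  c.sum fun i k => ι k * t ^ i

variable {ι : K →+* R} {t : R}

theorem ofCoeffs_add (c d : ℕ →₀ K) :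
    ofCoeffs ι t (c + d) = ofCoeffs ι t c + ofCoeffs ι t d :=
  Finsupp.sum_add_index' (fun _ => by simp) (fun _ _ _ => by rw [map_add, add_mul])

theorem ofCoeffs_single (i : ℕ) (k : K) : ofCoeffs ι t (Finsupp.single i k) = ι k * t ^ i :=
  Finsupp.sum_single_index (by simp)

end OfCoeffs

namespace IsSkewPolyRing

variable {K R : Type*} [DivisionRing K] [Ring R] {S : K →+* K} {D : K →+ K}
  {ι : K →+* R} {t : R}

variable (h : IsSkewPolyRing S D ι t)

theorem ofCoeffs_coeffs (r : R) : ofCoeffs ι t (coeffs h r) = r :=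
  (h.2 r).choose_spec.1.symm

theorem coeffs_ofCoeffs (c : ℕ →₀ K) : coeffs h (ofCoeffs ι t c) = c :=
  ((h.2 _).choose_spec.2 c rfl).symm

theorem coeffs_add (r s : R) : coeffs h (r + s) = coeffs h r + coeffs h s := by
  conv_lhs =>
    rw [← h.ofCoeffs_coeffs r, ← h.ofCoeffs_coeffs s, ← ofCoeffs_add, coeffs_ofCoeffs]

theorem coeffs_zero : coeffs h (0 : R) = 0 := by
  simpa [ofCoeffs] using h.coeffs_ofCoeffs 0

theorem coeffs_monomial (i : ℕ) (k : K) : coeffs h (ι k * t ^ i) = Finsupp.single i k := by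
  rw [← ofCoeffs_single, coeffs_ofCoeffs]

theorem coeffs_ι (k : K) : coeffs h (ι k) = Finsupp.single 0 k := by
  simpa using h.coeffs_monomial 0 k

theorem coeffs_mul_t (r : R) (j : ℕ) : coeffs h (r * t) (j + 1) = coeffs h r j := by
  have hshift : r * t = ofCoeffs ι t (Finsupp.mapDomain Nat.succ (coeffs h r)) := by
    rw [ofCoeffs, Finsupp.sum_mapDomain_index (by simp) (fun _ _ _ => by rw [map_add, add_mul])]
    conv_lhs => rw [← h.ofCoeffs_coeffs r]
    rw [ofCoeffs, Finsupp.sum_mul]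
    exact Finsupp.sum_congr fun i _ => by rw [mul_assoc, ← pow_succ]
  rw [hshift, coeffs_ofCoeffs]
  exact Finsupp.mapDomain_apply Nat.succ_injective _ j

theorem exists_pow_eq_mul_sub_add (h : IsSkewPolyRing S D ι t) (b : K) (i : ℕ) :
    ∃ (q : R) (c : K), t ^ i = q * (t - ι b) + ι c := by
  induction i with
  | zero => exact ⟨0, 1, by simp⟩
  | succ i ih =>
    obtain ⟨q, c, hqc⟩ := ih
    refine ⟨t * q + ι (S c), S c * b + D c, ?_⟩
    rw [pow_succ', hqc, mul_add, h.1, map_add, map_mul]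
    noncomm_ring

theorem exists_eq_mul_sub_add (h : IsSkewPolyRing S D ι t) (b : K) (p : R) :
    ∃ (q : R) (c : K), p = q * (t - ι b) + ι c := by
  rw [← h.ofCoeffs_coeffs p]
  induction coeffs h p using Finsupp.induction with
  | zero => exact ⟨0, 0, by simp [ofCoeffs]⟩
  | single_add i k _ _ _ ih =>
    obtain ⟨q, d, hqd⟩ := ih
    obtain ⟨q', c', hqc'⟩ := h.exists_pow_eq_mul_sub_add b i
    refine ⟨ι k * q' + q, k * c' + d, ?_⟩
    rw [ofCoeffs_add, ofCoeffs_single, hqd, hqc', map_add, map_mul]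
    noncomm_ring

def degreeLE (n : ℕ) : AddSubmonoid R where
  carrier := {r | ∀ j, n < j → coeffs h r j = 0}
  zero_mem' _ _ := by rw [h.coeffs_zero]; rfl
  add_mem' hr hs j hj := by rw [h.coeffs_add, Finsupp.add_apply, hr j hj, hs j hj, add_zero]

theorem degreeLE_mono {n m : ℕ} (hnm : n ≤ m) : h.degreeLE n ≤ h.degreeLE m :=
  fun _ hr j hj => hr j (hnm.trans_lt hj)

theorem monomial_mem_degreeLE {i n : ℕ} (hi : i ≤ n) (k : K) :
    ι k * t ^ i ∈ h.degreeLE n := by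
  intro j hj
  rw [coeffs_monomial, Finsupp.single_eq_of_ne (by omega)]

theorem degreeLE_le_of_monomial_mem {n : ℕ} {A : AddSubmonoid R}
    (hA : ∀ i ≤ n, ∀ k : K, ι k * t ^ i ∈ A) : h.degreeLE n ≤ A := by
  intro r hr
  rw [← h.ofCoeffs_coeffs r]
  refine AddSubmonoidClass.finsuppSum_mem _ _ _ fun i hi => hA i ?_ _
  by_contra hlt
  exact hi (hr i (not_le.mp hlt))

theorem ι_mul_mem_degreeLE (k : K) {n : ℕ} {r : R} (hr : r ∈ h.degreeLE n) :
    ι k * r ∈ h.degreeLE n := by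
  refine h.degreeLE_le_of_monomial_mem (A := (h.degreeLE n).comap (AddMonoidHom.mulLeft (ι k)))
    (fun i hi k' => ?_) hr
  simpa [← mul_assoc, ← map_mul] using h.monomial_mem_degreeLE hi (k * k')

theorem t_mul_mem_degreeLE {n : ℕ} {r : R} (hr : r ∈ h.degreeLE n) :
    t * r ∈ h.degreeLE (n + 1) := by
  refine h.degreeLE_le_of_monomial_mem (A := (h.degreeLE (n + 1)).comap (AddMonoidHom.mulLeft t))
    (fun i hi k => ?_) hr
  have hcomm : t * (ι k * t ^ i) = ι (S k) * t ^ (i + 1) + ι (D k) * t ^ i := by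
    rw [← mul_assoc, h.1, add_mul, mul_assoc, ← pow_succ']
  simpa [hcomm] using add_mem (h.monomial_mem_degreeLE (by omega) (S k))
    (h.monomial_mem_degreeLE (by omega) (D k))

theorem pow_mul_ι_mem_degreeLE (i : ℕ) (b : K) : t ^ i * ι b ∈ h.degreeLE i := by
  induction i with
  | zero => simpa using h.monomial_mem_degreeLE (i := 0) le_rfl b
  | succ i ih => simpa [pow_succ', mul_assoc] using h.t_mul_mem_degreeLE ih

theorem mul_ι_mem_degreeLE (b : K) {n : ℕ} {r : R} (hr : r ∈ h.degreeLE n) :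
    r * ι b ∈ h.degreeLE n := by
  refine h.degreeLE_le_of_monomial_mem (A := (h.degreeLE n).comap (AddMonoidHom.mulRight (ι b)))
    (fun i hi k => ?_) hr
  simpa [mul_assoc] using
    h.degreeLE_mono hi (h.ι_mul_mem_degreeLE k (h.pow_mul_ι_mem_degreeLE i b))

theorem mem_degreeLE_sdeg (r : R) : r ∈ h.degreeLE (sdeg h r) := fun j hj => by
  by_contra hne
  exact absurd (Finset.le_sup (f := id) (Finsupp.mem_support_iff.mpr hne)) (not_le.mpr hj)

theorem coeffs_sdeg_ne_zero {r : R} (hr : r ≠ 0) : coeffs h r (sdeg h r) ≠ 0 := by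
  have hsupp : (coeffs h r).support.Nonempty := by
    rw [Finsupp.support_nonempty_iff]
    rintro h0
    exact hr (by rw [← h.ofCoeffs_coeffs r, h0]; simp [ofCoeffs])
  obtain ⟨i, hi, hmax⟩ := Finset.exists_mem_eq_sup _ hsupp id
  rw [sdeg, hmax]
  exact Finsupp.mem_support_iff.mp hi

/-- Comparing coefficients of `t^(deg u + 1)` in `u·t = ι d + u·ι b`. -/
theorem eq_zero_of_mul_sub_eq_ι (h : IsSkewPolyRing S D ι t) {u : R} {b d : K}
    (hu : u * (t - ι b) = ι d) : d = 0 := by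
  rcases eq_or_ne u 0 with rfl | hu0
  · simpa [h.coeffs_zero, h.coeffs_ι, eq_comm] using congrArg (coeffs h) hu
  · have hshift : u * t = ι d + u * ι b := by rw [← hu]; noncomm_ring
    have := congrArg (fun r => coeffs h r (sdeg h u + 1)) hshift
    simp only [coeffs_mul_t, coeffs_add, Finsupp.add_apply, coeffs_ι,
      Finsupp.single_eq_of_ne (Nat.succ_ne_zero _),
      h.mul_ι_mem_degreeLE b (h.mem_degreeLE_sdeg u) _ (Nat.lt_succ_self _), add_zero] at this
    exact absurd this (h.coeffs_sdeg_ne_zero hu0)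

theorem ι_mem_span_sub_iff (h : IsSkewPolyRing S D ι t) {b d : K} :
    ι d ∈ Ideal.span {t - ι b} ↔ d = 0 := by
  refine ⟨fun hd => ?_, fun hd => by simp [hd]⟩
  obtain ⟨u, hu⟩ := Ideal.mem_span_singleton'.mp hd
  exact h.eq_zero_of_mul_sub_eq_ι hu

end IsSkewPolyRing

theorem llcm_with_linear_general {K R : Type*} [DivisionRing K] [Ring R] (S : K →+* K) (D : K →+ K)
    (ι : K →+* R) (t : R) (h : IsSkewPolyRing S D ι t)
    (f : R) (a ev : K) (hev : f - ι ev ∈ Ideal.span {t - ι a}) :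
    (ev = 0 → Ideal.span {f} ⊓ Ideal.span {t - ι a} = Ideal.span {f}) ∧
    (ev ≠ 0 → Ideal.span {f} ⊓ Ideal.span {t - ι a} =
      Ideal.span {(t - ι (sdConj S D a ev)) * f}) := by
  set I := Ideal.span {t - ι a}
  refine ⟨fun h0 => inf_eq_left.mpr ?_, fun hne => ?_⟩
  · simpa [h0, Ideal.span_singleton_le_iff_mem] using hev
  set g := t - ι (sdConj S D a ev)
  have hgf : g * f ∈ I := by
    have hsplit : g * f = g * (f - ι ev) + g * ι ev := by rw [mul_sub, sub_add_cancel]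
    rw [hsplit, sub_sdConj_mul h.1 a hne]
    exact add_mem (I.mul_mem_left g hev) (I.mul_mem_left _ (Ideal.mem_span_singleton_self _))
  refine le_antisymm (fun x hx => ?_) ?_
  · obtain ⟨p, rfl⟩ := Ideal.mem_span_singleton'.mp (Submodule.mem_inf.mp hx).1
    obtain ⟨q, c, rfl⟩ := h.exists_eq_mul_sub_add (sdConj S D a ev) p
    have hcev : ι (c * ev) ∈ I := by
      have hsplit : ι (c * ev) = (q * g + ι c) * f - q * (g * f) - ι c * (f - ι ev) := by
        rw [map_mul]; noncomm_ring
      rw [hsplit]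
      exact sub_mem (sub_mem (Submodule.mem_inf.mp hx).2 (I.mul_mem_left q hgf))
        (I.mul_mem_left _ hev)
    have hc : c = 0 := (mul_eq_zero.mp (h.ι_mem_span_sub_iff.mp hcev)).resolve_right hne
    exact Ideal.mem_span_singleton'.mpr ⟨q, by rw [hc, map_zero, add_zero, mul_assoc]⟩
  · rw [Ideal.span_singleton_le_iff_mem]
    exact Submodule.mem_inf.mpr ⟨Ideal.mul_mem_left _ _ (Ideal.mem_span_singleton_self f), hgf⟩

/-- If `f(a) = 0` then `f` is a least left common multiple of `f` and `t−a`; if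
`f(a) ≠ 0` then `R·f ∩ R·(t−a) = R·(t − a^{f(a)})·f`. -/
theorem llcm_with_linear {K R : Type*} [DivisionRing K] [Ring R] (S : K →+* K) (D : K →+ K)
    (hD : ∀ a b : K, D (a * b) = S a * D b + D a * b)
    (ι : K →+* R) (t : R) (h : IsSkewPolyRing S D ι t)
    (f : R) (a ev : K) (hev : f - ι ev ∈ Ideal.span {t - ι a}) :
    (ev = 0 → Ideal.span {f} ⊓ Ideal.span {t - ι a} = Ideal.span {f}) ∧
    (ev ≠ 0 → Ideal.span {f} ⊓ Ideal.span {t - ι a} =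
      Ideal.span {(t - ι (sdConj S D a ev)) * f}) :=
  llcm_with_linear_general S D ι t h f a ev hev
end

section
/- Generalized symmetric functions in degree 2: for x₁ ≠ x₂ in a division ring K with endomorphism S and S-derivation D, one has the two identities x₁^{x₁−x₂} + S(x₂) = x₂^{x₂−x₁} + S(x₁) and x₁^{x₁−x₂}·x₂ − D(x₂) = x₂^{x₂−x₁}·x₁ − D(x₁). -/
/-- Generalized symmetric functions in degree 2:
`x₁^{x₁−x₂} + S(x₂) = x₂^{x₂−x₁} + S(x₁)` and
`x₁^{x₁−x₂}·x₂ − D(x₂) = x₂^{x₂−x₁}·x₁ − D(x₁)`. -/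
theorem symmetric_functions_degree_two {K : Type*} [DivisionRing K]
    (S : K →+* K) (D : K →+ K)
    (hD : ∀ a b : K, D (a * b) = S a * D b + D a * b)
    (x₁ x₂ : K) (h : x₁ ≠ x₂) :
    sdConj S D x₁ (x₁ - x₂) + S x₂ = sdConj S D x₂ (x₂ - x₁) + S x₁ ∧
    sdConj S D x₁ (x₁ - x₂) * x₂ - D x₂ = sdConj S D x₂ (x₂ - x₁) * x₁ - D x₁ := by
  set c := x₁ - x₂ with hc
  have hc0 : c ≠ 0 := sub_ne_zero.mpr h
  have hcc : c * c⁻¹ = 1 := mul_inv_cancel₀ hc0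
  have hcc' : c⁻¹ * c = 1 := inv_mul_cancel₀ hc0
  have h21 : x₂ - x₁ = -c := by rw [hc, neg_sub]
  have hconj2 : sdConj S D x₂ (x₂ - x₁) = S c * x₂ * c⁻¹ + D c * c⁻¹ := by
    rw [sdConj, h21, map_neg, map_neg, inv_neg]
    noncomm_ring
  have key : x₁ * c⁻¹ * x₂ = x₂ * c⁻¹ * x₁ := by
    have h1 : c * (c⁻¹ * x₂) = x₂ := by rw [← mul_assoc, hcc, one_mul]
    have h2 : x₂ * c⁻¹ * c = x₂ := by rw [mul_assoc, hcc', mul_one]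
    have e1 : x₁ * c⁻¹ * x₂ = c * (c⁻¹ * x₂) + x₂ * c⁻¹ * x₂ := by
      rw [hc]; noncomm_ring
    have e2 : x₂ * c⁻¹ * x₁ = x₂ * c⁻¹ * c + x₂ * c⁻¹ * x₂ := by
      rw [hc]; noncomm_ring
    rw [e1, e2, h1, h2]
  have hSc : S c * c * c⁻¹ = S c := by rw [mul_assoc, hcc, mul_one]
  constructor
  · rw [hconj2, sdConj]
    have : S c * x₁ * c⁻¹ - S c * x₂ * c⁻¹ = S x₁ - S x₂ := by
      calc S c * x₁ * c⁻¹ - S c * x₂ * c⁻¹ = S c * (x₁ - x₂) * c⁻¹ := by noncomm_ring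
        _ = S c := by rw [← hc, hSc]
        _ = S x₁ - S x₂ := by rw [hc, map_sub]
    linear_combination (norm := noncomm_ring) this
  · rw [hconj2, sdConj]
    have hDc : D c * c⁻¹ * x₂ - D c * c⁻¹ * x₁ = D x₂ - D x₁ := by
      calc D c * c⁻¹ * x₂ - D c * c⁻¹ * x₁ = D c * c⁻¹ * -(x₁ - x₂) := by noncomm_ring
        _ = -(D c * c⁻¹ * c) := by rw [← hc]; noncomm_ring
        _ = -D c := by rw [mul_assoc, hcc', mul_one]
        _ = D x₂ - D x₁ := by rw [hc, map_sub, neg_sub]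
    have hk : S c * x₁ * c⁻¹ * x₂ = S c * x₂ * c⁻¹ * x₁ := by
      rw [mul_assoc (S c) x₁ c⁻¹, mul_assoc (S c) (x₁ * c⁻¹) x₂, key, ← mul_assoc, ← mul_assoc]
    linear_combination (norm := noncomm_ring) hDc + hk
end

section
/- Let K be a division ring, S an endomorphism, D an S-derivation, and a ∈ K. Define Tₐ : K → K by Tₐ(x) = S(x)a + D(x). Then for any f(t) = Σ aᵢtⁱ ∈ K[t;S,D] and any nonzero x ∈ K, f(Tₐ)(x) = f(a^x)·x, where f(Tₐ) means Σ aᵢ·Tₐⁱ and f(b) denotes right evaluation of f at b. -/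
/-- The pseudo-linear map `Tₐ(x) = S(x)a + D(x)`. -/
def sdT {K : Type*} [DivisionRing K] (S : K →+* K) (D : K →+ K) (a x : K) : K :=
  S x * a + D x

/-- `Nᵢ(x)`: `N₀(x) = 1`, `N_{i+1}(x) = S(Nᵢ(x))x + D(Nᵢ(x))`, so that right evaluation
of `f = Σ aᵢtⁱ` at `x` is `f(x) = Σ aᵢ Nᵢ(x)`. -/
def sdN {K : Type*} [DivisionRing K] (S : K →+* K) (D : K →+ K) (x : K) : ℕ → K
  | 0 => 1
  | i + 1 => S (sdN S D x i) * x + D (sdN S D x i)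


/-! The Leibniz rule gives `Tₐ(y·x) = (S(y)·b + D(y))·x` whenever `Tₐ(x) = b·x`, which is exactly the
recursion defining `Nᵢ(b)`; hence `Tₐⁱ(x) = Nᵢ(b)·x`. For `x ≠ 0` one may take `b = a^x`. -/

section PseudoLinear

variable {K : Type*} [DivisionRing K] (S : K →+* K) (D : K →+ K)

theorem sdT_mul (hD : ∀ a b : K, D (a * b) = S a * D b + D a * b) (a y x : K) :
    sdT S D a (y * x) = S y * sdT S D a x + D y * x := by
  simp only [sdT, map_mul, hD, mul_add, mul_assoc, add_assoc]

theorem sdConj_mul_self (a : K) {x : K} (hx : x ≠ 0) : sdConj S D a x * x = sdT S D a x := by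
  simp only [sdConj, sdT, add_mul, mul_assoc, inv_mul_cancel₀ hx, mul_one]

theorem sdT_iterate_eq_sdN_mul (hD : ∀ a b : K, D (a * b) = S a * D b + D a * b) {a b x : K}
    (hb : sdT S D a x = b * x) (i : ℕ) : (sdT S D a)^[i] x = sdN S D b i * x := by
  induction i with
  | zero => simp [sdN]
  | succ i ih =>
    rw [Function.iterate_succ_apply', ih, sdT_mul S D hD, hb, sdN, add_mul, mul_assoc]

end PseudoLinear

/-- For `f = Σ aᵢtⁱ` and nonzero `x`, `f(Tₐ)(x) = f(a^x)·x`. -/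
theorem eval_pseudoLinear {K : Type*} [DivisionRing K] (S : K →+* K) (D : K →+ K)
    (hD : ∀ a b : K, D (a * b) = S a * D b + D a * b)
    (f : ℕ →₀ K) (a x : K) (hx : x ≠ 0) :
    (f.sum fun i k => k * (sdT S D a)^[i] x) =
      (f.sum fun i k => k * sdN S D (sdConj S D a x) i) * x := by
  have hiter := sdT_iterate_eq_sdN_mul S D hD (sdConj_mul_self S D a hx).symm
  rw [Finsupp.sum_mul]
  exact Finsupp.sum_congr fun i _ => by rw [hiter, mul_assoc]
end

section
/- Let K be a division ring, S an endomorphism, D an S-derivation, and a ∈ K. The (S,D)-centralizer C(a) := {x ∈ K \ {0} : S(x)a x⁻¹ + D(x)x⁻¹ = a} ∪ {0} is a subdivision ring of K (it is closed under addition, multiplication, and inverses of nonzero elements, and contains 1). -/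
/-!
Writing `δ x = S x * a + D x - a * x`, the centralizer `C(a)` is the kernel of `δ`. The map
`x ↦ S x * a - a * x` is an (inner) `S`-derivation, so `δ` is an `S`-derivation too, and the kernel
of any map obeying the twisted Leibniz rule `δ (x * y) = σ x * δ y + δ x * y` on a division ring
is a subdivision ring (a `Subfield`, in Mathlib's terms): `δ 1 = δ 1 + δ 1` and,
for `x ≠ 0`, `0 = δ (x⁻¹ * x) = σ x⁻¹ * δ x + δ x⁻¹ * x`.
-/

/-- The `(S,D)`-centralizer of `a`:
`C(a) = {x ≠ 0 : S(x)a x⁻¹ + D(x)x⁻¹ = a} ∪ {0}`. -/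
def sdCentralizer {K : Type*} [DivisionRing K] (S : K →+* K) (D : K →+ K) (a : K) : Set K :=
  {x | x = 0 ∨ S x * a * x⁻¹ + D x * x⁻¹ = a}

section

variable {K : Type*} [DivisionRing K]

theorem map_one_eq_zero_of_twistedLeibniz {σ : K →* K} {δ : K →+ K}
    (hδ : ∀ x y, δ (x * y) = σ x * δ y + δ x * y) : δ 1 = 0 := by
  simpa using hδ 1 1

def Subfield.kerOfTwistedLeibniz (σ : K →* K) (δ : K →+ K)
    (hδ : ∀ x y, δ (x * y) = σ x * δ y + δ x * y) : Subfield K where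
  __ := δ.ker
  one_mem' := map_one_eq_zero_of_twistedLeibniz hδ
  mul_mem' {x y} (hx : δ x = 0) (hy : δ y = 0) := show δ (x * y) = 0 by
    rw [hδ, hx, hy, mul_zero, zero_mul, add_zero]
  inv_mem' x (hx : δ x = 0) := show δ x⁻¹ = 0 by
    rcases eq_or_ne x 0 with rfl | hx0
    · simp
    have h := hδ x⁻¹ x
    rw [inv_mul_cancel₀ hx0, map_one_eq_zero_of_twistedLeibniz hδ, hx, mul_zero, zero_add] at h
    exact (mul_eq_zero.mp h.symm).resolve_right hx0

end

section

variable {R : Type*} [Ring R]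

theorem twistedLeibniz_add {σ : R → R} {δ₁ δ₂ : R →+ R}
    (h₁ : ∀ x y, δ₁ (x * y) = σ x * δ₁ y + δ₁ x * y)
    (h₂ : ∀ x y, δ₂ (x * y) = σ x * δ₂ y + δ₂ x * y) (x y : R) :
    (δ₁ + δ₂) (x * y) = σ x * (δ₁ + δ₂) y + (δ₁ + δ₂) x * y := by
  simp only [AddMonoidHom.add_apply, h₁, h₂]
  noncomm_ring

def innerSDerivation (S : R →+* R) (a : R) : R →+ R :=
  (AddMonoidHom.mulRight a).comp S.toAddMonoidHom - AddMonoidHom.mulLeft a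

@[simp]
theorem innerSDerivation_apply (S : R →+* R) (a x : R) :
    innerSDerivation S a x = S x * a - a * x :=
  rfl

theorem innerSDerivation_mul (S : R →+* R) (a x y : R) :
    innerSDerivation S a (x * y) = S x * innerSDerivation S a y + innerSDerivation S a x * y := by
  simp only [innerSDerivation_apply, map_mul]
  noncomm_ring

end

theorem sdCentralizer_eq_setOf {K : Type*} [DivisionRing K] (S : K →+* K) (D : K →+ K) (a : K) :
    sdCentralizer S D a = {x | (D + innerSDerivation S a) x = 0} := by
  ext x
  simp only [sdCentralizer, Set.mem_ofPred_eq, AddMonoidHom.add_apply, innerSDerivation_apply]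
  rcases eq_or_ne x 0 with rfl | hx
  · simp
  rw [or_iff_right hx, ← add_mul, mul_inv_eq_iff_eq_mul₀ hx, ← sub_eq_zero]
  abel_nf

/-- The `(S,D)`-centralizer of `a` is a subdivision ring of `K`: it contains `1` and is
closed under addition, multiplication and inverses. -/
theorem sdCentralizer_subdivisionRing {K : Type*} [DivisionRing K]
    (S : K →+* K) (D : K →+ K)
    (hD : ∀ a b : K, D (a * b) = S a * D b + D a * b) (a : K) :
    (1 : K) ∈ sdCentralizer S D a ∧
    (∀ x ∈ sdCentralizer S D a, ∀ y ∈ sdCentralizer S D a, x + y ∈ sdCentralizer S D a) ∧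
    (∀ x ∈ sdCentralizer S D a, ∀ y ∈ sdCentralizer S D a, x * y ∈ sdCentralizer S D a) ∧
    (∀ x ∈ sdCentralizer S D a, x⁻¹ ∈ sdCentralizer S D a) := by
  let C := Subfield.kerOfTwistedLeibniz (S : K →* K) (D + innerSDerivation S a)
    (twistedLeibniz_add hD (innerSDerivation_mul S a))
  have hC : sdCentralizer S D a = C := sdCentralizer_eq_setOf S D a
  rw [hC]
  exact ⟨C.one_mem, fun _ hx _ hy => C.add_mem hx hy, fun _ hx _ hy => C.mul_mem hx hy,
    fun _ hx => C.inv_mem hx⟩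
end

section
/- Let K be a division ring, S an endomorphism, D an S-derivation, a ∈ K, and u₁,…,uₙ nonzero elements of K. The generalized Vandermonde matrix V(a^{u₁},…,a^{uₙ}) is invertible if and only if the generalized Wronskian matrix W(u₁,…,uₙ) with entries Tₐ^{i-1}(u_j) is invertible. -/
lemma sdN_conj_mul {K : Type*} [DivisionRing K] (S : K →+* K) (D : K →+ K)
    (hD : ∀ a b : K, D (a * b) = S a * D b + D a * b)
    (a u : K) (hu : u ≠ 0) (i : ℕ) :
    sdN S D (sdConj S D a u) i * u = (sdT S D a)^[i] u := by
  induction i with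
  | zero => simp [sdN]
  | succ i ih =>
    rw [Function.iterate_succ_apply', ← ih]
    have hc : sdConj S D a u * u = S u * a + D u := by
      rw [sdConj, add_mul, mul_assoc (S u * a), inv_mul_cancel₀ hu, mul_one,
        mul_assoc (D u), inv_mul_cancel₀ hu, mul_one]
    show (S (sdN S D (sdConj S D a u) i) * sdConj S D a u
        + D (sdN S D (sdConj S D a u) i)) * u = _
    rw [sdT, map_mul, hD, add_mul, mul_assoc, hc, mul_add, ← mul_assoc, add_assoc]

/-- The generalized Vandermonde matrix `V(a^{u₁},…,a^{uₙ})` is invertible iff the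
generalized Wronskian matrix `W(u₁,…,uₙ)` is invertible. -/
theorem vandermonde_isUnit_iff_wronskian_isUnit {K : Type*} [DivisionRing K]
    (S : K →+* K) (D : K →+ K)
    (hD : ∀ a b : K, D (a * b) = S a * D b + D a * b)
    (n : ℕ) (a : K) (u : Fin n → K) (hu : ∀ j, u j ≠ 0) :
    IsUnit (Matrix.of fun i j : Fin n => sdN S D (sdConj S D a (u j)) (i : ℕ)) ↔
      IsUnit (Matrix.of fun i j : Fin n => (sdT S D a)^[(i : ℕ)] (u j)) := by
  set V := Matrix.of fun i j : Fin n => sdN S D (sdConj S D a (u j)) (i : ℕ)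
  have hW : (Matrix.of fun i j : Fin n => (sdT S D a)^[(i : ℕ)] (u j))
      = V * Matrix.diagonal u := by
    ext i j
    rw [Matrix.mul_diagonal]
    exact (sdN_conj_mul S D hD a (u j) (hu j) i).symm
  rw [hW]
  have dunit : IsUnit (Matrix.diagonal u) := by
    have h1 : Matrix.diagonal u * Matrix.diagonal (fun j => (u j)⁻¹) = 1 := by
      rw [Matrix.diagonal_mul_diagonal]
      convert Matrix.diagonal_one
      simp [mul_inv_cancel₀ (hu _)]
    have h2 : Matrix.diagonal (fun j => (u j)⁻¹) * Matrix.diagonal u = 1 := by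
      rw [Matrix.diagonal_mul_diagonal]
      convert Matrix.diagonal_one
      simp [inv_mul_cancel₀ (hu _)]
    exact ⟨⟨_, _, h1, h2⟩, rfl⟩
  obtain ⟨d, hd⟩ := dunit
  rw [← hd, Units.isUnit_mul_units]
end

section
/- Quasideterminant via inverse: let K be a division ring and A ∈ Mₙ(K) invertible with the (n−1)×(n−1) submatrix A^{nn} (obtained by deleting the last row and column) also invertible. Then the (n,n)-quasideterminant |A|_{nn} := a_{nn} − r·(A^{nn})⁻¹·c satisfies |A|_{nn} = ((A⁻¹)_{nn})⁻¹, where r is the last row of A without its last entry and c is the last column of A without its last entry. -/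
/-!
Let `(v, α)` be the last column of `A⁻¹`, split as `A` is split into the block `B = A^{nn}`, the
column `c`, the row `r` and the corner `d`. The last column of `A * A⁻¹ = 1` reads
`B v + c α = 0` and `r v + d α = 1`; the first gives `v = -B⁻¹ c α`, and substituting into the
second gives `(d - r B⁻¹ c) α = 1`. Since `α` only ever multiplies from the right (written
`MulOpposite.op α •`), the argument works over any ring.
-/

open Matrix

namespace Matrix

variable {m R : Type*} [Fintype m] [DecidableEq m] [Ring R]

theorem sub_dotProduct_mulVec_mul_eq_one {B B' : Matrix m m R} (hB : B' * B = 1)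
    {r c v : m → R} {d α : R}
    (hcol : B *ᵥ v + MulOpposite.op α • c = 0) (hlast : r ⬝ᵥ v + d * α = 1) :
    (d - r ⬝ᵥ (B' *ᵥ c)) * α = 1 := by
  have hv : v = -(MulOpposite.op α • (B' *ᵥ c)) := by
    rw [← mulVec_smul, ← mulVec_neg, ← eq_neg_of_add_eq_zero_left hcol, mulVec_mulVec, hB,
      one_mulVec]
  rwa [hv, dotProduct_neg, dotProduct_smul, op_smul_eq_mul, neg_add_eq_sub, ← sub_mul] at hlast

end Matrix

theorem quasideterminant_eq_inv_entry_inv_general {K : Type*} [DivisionRing K] (n : ℕ)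
    (A A' : Matrix (Fin (n + 1)) (Fin (n + 1)) K)
    (hA : A * A' = 1)
    (B' : Matrix (Fin n) (Fin n) K)
    (hB' : B' * A.submatrix Fin.castSucc Fin.castSucc = 1) :
    A (Fin.last n) (Fin.last n) -
        dotProduct (fun j : Fin n => A (Fin.last n) (Fin.castSucc j))
          (B'.mulVec fun i : Fin n => A (Fin.castSucc i) (Fin.last n)) =
      (A' (Fin.last n) (Fin.last n))⁻¹ := by
  have hentry (i j : Fin (n + 1)) :
      ∑ k : Fin n, A i k.castSucc * A' k.castSucc j + A i (Fin.last n) * A' (Fin.last n) j =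
        (1 : Matrix (Fin (n + 1)) (Fin (n + 1)) K) i j := by
    rw [← hA, mul_apply, Fin.sum_univ_castSucc]
  refine (inv_eq_of_mul_eq_one_left (sub_dotProduct_mulVec_mul_eq_one hB'
    (v := fun k => A' k.castSucc (Fin.last n)) ?_ ?_)).symm
  · funext i
    simpa [mulVec, dotProduct, (Fin.castSucc_lt_last i).ne] using hentry i.castSucc (Fin.last n)
  · simpa [dotProduct] using hentry (Fin.last n) (Fin.last n)

/-- Quasideterminant via the inverse matrix: if `A` is invertible (with two-sided inverse
`A'`) and the submatrix `B` of `A` obtained by deleting the last row and column is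
invertible (with two-sided inverse `B'`), then the `(n,n)`-quasideterminant
`|A|_{nn} = a_{nn} − r·B⁻¹·c` equals `((A⁻¹)_{nn})⁻¹`. -/
theorem quasideterminant_eq_inv_entry_inv {K : Type*} [DivisionRing K] (n : ℕ)
    (A A' : Matrix (Fin (n + 1)) (Fin (n + 1)) K)
    (hA : A * A' = 1) (hA' : A' * A = 1)
    (B' : Matrix (Fin n) (Fin n) K)
    (hB : A.submatrix Fin.castSucc Fin.castSucc * B' = 1)
    (hB' : B' * A.submatrix Fin.castSucc Fin.castSucc = 1) :
    A (Fin.last n) (Fin.last n) -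
        dotProduct (fun j : Fin n => A (Fin.last n) (Fin.castSucc j))
          (B'.mulVec fun i : Fin n => A (Fin.castSucc i) (Fin.last n)) =
      (A' (Fin.last n) (Fin.last n))⁻¹ :=
  quasideterminant_eq_inv_entry_inv_general n A A' hA B' hB'
end

section
/- If A is a ring, S an endomorphism of A, D an S-derivation, and for every a, b ∈ A there exist c, d ∈ A with (t−c)(t−a) = (t−d)(t−b) in R = A[t;S,D], then for every finite set {a₁,…,aₙ} ⊆ A there exists a monic polynomial of degree n lying in ∩_{i=1}^n R·(t − aᵢ). -/
/-!
Expanding `(t - c₁) ⋯ (t - cₙ)` with the commutation rule shows that such a product is monic of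
degree `n` in `t`, with coefficients on the left. The exchange hypothesis
`(t - c)(t - a) = (t - d)(t - b)` lets one move any prescribed right factor `t - b` through a
product of linear factors, at the price of changing the leftmost factor; so, adding the `aᵢ` one
at a time, one builds a product of `n` linear factors that is right divisible by every `t - aᵢ`.
-/

open Finset

section

variable {A R : Type*} [Ring A] [Ring R] (ι : A →+* R) (t : R)

def leftDegreeLT (n : ℕ) : AddSubgroup R where
  carrier := {p | ∃ e : ℕ → A, p = ∑ i ∈ range n, ι (e i) * t ^ i}
  zero_mem' := ⟨0, by simp⟩
  add_mem' := by
    rintro _ _ ⟨e, rfl⟩ ⟨f, rfl⟩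
    exact ⟨e + f, by simp [add_mul, sum_add_distrib]⟩
  neg_mem' := by
    rintro _ ⟨e, rfl⟩
    exact ⟨-e, by simp [sum_neg_distrib]⟩

namespace leftDegreeLT

variable {ι t}

theorem monomial_mem {n i : ℕ} (hi : i < n) (x : A) : ι x * t ^ i ∈ leftDegreeLT ι t n :=
  ⟨fun j => if j = i then x else 0, by simp [apply_ite ι, ite_mul, hi]⟩

theorem le_succ (n : ℕ) : leftDegreeLT ι t n ≤ leftDegreeLT ι t (n + 1) := by
  rintro _ ⟨e, rfl⟩
  exact AddSubgroup.sum_mem _ fun i hi => monomial_mem (by simp at hi; omega) _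

theorem ι_mul_mem {n : ℕ} (x : A) {p : R} (hp : p ∈ leftDegreeLT ι t n) :
    ι x * p ∈ leftDegreeLT ι t n := by
  obtain ⟨e, rfl⟩ := hp
  rw [mul_sum]
  exact AddSubgroup.sum_mem _ fun i hi => by
    rw [← mul_assoc, ← map_mul]
    exact monomial_mem (mem_range.mp hi) _

theorem mul_mem_succ (hcomm : ∀ x : A, ∃ y z : A, t * ι x = ι y * t + ι z) {n : ℕ} {p : R}
    (hp : p ∈ leftDegreeLT ι t n) : t * p ∈ leftDegreeLT ι t (n + 1) := by
  obtain ⟨e, rfl⟩ := hp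
  rw [mul_sum]
  refine AddSubgroup.sum_mem _ fun i hi => ?_
  obtain ⟨y, z, hyz⟩ := hcomm (e i)
  have hi : i < n := mem_range.mp hi
  rw [← mul_assoc, hyz, add_mul, mul_assoc, ← pow_succ']
  exact add_mem (monomial_mem (by omega) y) (monomial_mem (by omega) z)

end leftDegreeLT

def linearProd (l : List A) : R :=
  (l.map fun d => t - ι d).prod

variable {ι t}

theorem linearProd_sub_pow_mem (hcomm : ∀ x : A, ∃ y z : A, t * ι x = ι y * t + ι z)
    (l : List A) : linearProd ι t l - t ^ l.length ∈ leftDegreeLT ι t l.length := by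
  induction l with
  | nil => simp [linearProd]
  | cons d l ih =>
    set q := linearProd ι t l - t ^ l.length
    have hprod : linearProd ι t (d :: l) - t ^ (l.length + 1)
        = t * q - ι d * t ^ l.length - ι d * q := by
      simp only [linearProd, List.map_cons, List.prod_cons, pow_succ', q]
      noncomm_ring
    rw [List.length_cons, hprod]
    exact sub_mem (sub_mem (leftDegreeLT.mul_mem_succ hcomm ih)
      (leftDegreeLT.monomial_mem (Nat.lt_succ_self _) d))
      (leftDegreeLT.le_succ _ (leftDegreeLT.ι_mul_mem d ih))

variable (H : ∀ a b : A, ∃ c d : A, (t - ι c) * (t - ι a) = (t - ι d) * (t - ι b))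
include H

theorem exists_sub_mul_linearProd_mem_span (l : List A) (b : A) :
    ∃ c : A, (t - ι c) * linearProd ι t l ∈ Ideal.span {t - ι b} := by
  induction l with
  | nil => exact ⟨b, by simp [linearProd]⟩
  | cons d l ih =>
    obtain ⟨c', hc'⟩ := ih
    obtain ⟨c, e, hce⟩ := H d c'
    refine ⟨c, ?_⟩
    simp only [linearProd, List.map_cons, List.prod_cons] at hc' ⊢
    rw [← mul_assoc, hce, mul_assoc]
    exact Ideal.mul_mem_left _ _ hc'

theorem exists_linearProd_mem_span (s : List A) :
    ∃ l : List A, l.length = s.length ∧ ∀ b ∈ s, linearProd ι t l ∈ Ideal.span {t - ι b} := by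
  induction s with
  | nil => exact ⟨[], rfl, by simp⟩
  | cons b s ih =>
    obtain ⟨l, hlen, hl⟩ := ih
    obtain ⟨c, hc⟩ := exists_sub_mul_linearProd_mem_span H l b
    refine ⟨c :: l, by simp [hlen], fun b' hb' => ?_⟩
    rcases List.mem_cons.mp hb' with rfl | hb'
    · exact hc
    · exact Ideal.mul_mem_left _ _ (hl b' hb')

end

theorem monic_common_left_multiple_general {A R : Type*} [Ring A] [Ring R]
    (S : A →+* A) (D : A →+ A)
    (ι : A →+* R) (t : R)
    (hcomm : ∀ x : A, t * ι x = ι (S x) * t + ι (D x))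
    (H : ∀ a b : A, ∃ c d : A, (t - ι c) * (t - ι a) = (t - ι d) * (t - ι b))
    (n : ℕ) (a : Fin n → A) :
    ∃ e : Fin n → A,
      (t ^ n + ∑ i : Fin n, ι (e i) * t ^ (i : ℕ)) ∈
        ⨅ i : Fin n, Ideal.span {t - ι (a i)} := by
  obtain ⟨l, hlen, hl⟩ := exists_linearProd_mem_span H (List.ofFn a)
  rw [List.length_ofFn] at hlen
  obtain ⟨e, he⟩ := linearProd_sub_pow_mem (fun x => ⟨S x, D x, hcomm x⟩) l
  rw [hlen] at he
  refine ⟨fun i => e i, ?_⟩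
  rw [Fin.sum_univ_eq_sum_range (fun i => ι (e i) * t ^ i), ← he, add_sub_cancel,
    Ideal.mem_iInf]
  exact fun i => hl (a i) (List.mem_ofFn.mpr ⟨i, rfl⟩)

/-- If in `R = A[t;S,D]` (here: any ring `R` with `ι : A →+* R` and `t` satisfying the
commutation rule `t·a = S(a)t + D(a)`) every pair `a, b` admits `c, d` with
`(t−c)(t−a) = (t−d)(t−b)`, then for every `a₁,…,aₙ` there is a monic polynomial of
degree `n` in `∩ᵢ R·(t − aᵢ)`. -/
theorem monic_common_left_multiple {A R : Type*} [Ring A] [Ring R]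
    (S : A →+* A) (D : A →+ A)
    (hD : ∀ x y : A, D (x * y) = S x * D y + D x * y)
    (ι : A →+* R) (t : R)
    (hcomm : ∀ x : A, t * ι x = ι (S x) * t + ι (D x))
    (H : ∀ a b : A, ∃ c d : A, (t - ι c) * (t - ι a) = (t - ι d) * (t - ι b))
    (n : ℕ) (a : Fin n → A) :
    ∃ e : Fin n → A,
      (t ^ n + ∑ i : Fin n, ι (e i) * t ^ (i : ℕ)) ∈
        ⨅ i : Fin n, Ideal.span {t - ι (a i)} :=
  monic_common_left_multiple_general S D ι t hcomm H n a
end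

section
/- Characterization of rings admitting common left multiples of linear polynomials: let A be a ring, S an endomorphism, D an S-derivation, R = A[t;S,D]. The following are equivalent: (1) for every a,b ∈ A there is a monic polynomial of degree 2 in R(t−a) ∩ R(t−b); (2) for every r, b ∈ A there exists c ∈ A with c·r = S(r)·b + D(r). -/
/-!
Both directions run through right evaluation. For `a : A`, the pseudo-linear map
`T_a x = S x * a + D x` makes `A` a left `R`-module with `t` acting as `T_a`; evaluating at
`1` gives an additive map `ev_a : R → A` with `ev_a (ι k * tⁱ) = k * T_aⁱ 1` that kills the left
ideal `R (t - a)`. So if `t² + e₁ t + e₀` lies in `R (t - a)`, then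
`S a * a + D a + e₁ * a + e₀ = 0`; subtracting these relations for `r + b` and `b` produces `c`.
Conversely `(t + w)(t - z) = t² + (w - S z) t - (D z + w z)`, and the two factorisations through
`t - a` and `t - b` agree exactly when `-w (a - b) = S (a - b) * b + D (a - b)`, which is what
condition (2) supplies.
-/

namespace OreExtension

variable {A R : Type*} [Ring A] [Ring R]

def pseudoLinearMap (S : A →+* A) (D : A →+ A) (a : A) : A →+ A :=
  (AddMonoidHom.mulRight a).comp S.toAddMonoidHom + D

theorem pseudoLinearMap_apply (S : A →+* A) (D : A →+ A) (a x : A) :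
    pseudoLinearMap S D a x = S x * a + D x :=
  rfl

theorem derivation_map_one {S : A →+* A} {D : A →+ A}
    (hD : ∀ x y : A, D (x * y) = S x * D y + D x * y) : D 1 = 0 := by
  have h := hD 1 1
  rw [mul_one, map_one S, one_mul, mul_one] at h
  exact left_eq_add.mp h

theorem pseudoLinearMap_one {S : A →+* A} {D : A →+ A}
    (hD : ∀ x y : A, D (x * y) = S x * D y + D x * y) (a : A) :
    pseudoLinearMap S D a 1 = a := by
  rw [pseudoLinearMap_apply, map_one, one_mul, derivation_map_one hD, add_zero]

theorem addMonoidHom_ext_of_span {M : Type*} [AddCommMonoid M] {ι : A →+* R} {t : R}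
    (hspan : ∀ r : R, ∃ c : ℕ →₀ A, r = c.sum fun i k => ι k * t ^ i) {f g : R →+ M}
    (h : ∀ i k, f (ι k * t ^ i) = g (ι k * t ^ i)) : f = g := by
  ext r
  obtain ⟨c, rfl⟩ := hspan r
  simp only [map_finsuppSum, h]

noncomputable def expandCoeffs (ι : A →+* R) (t : R) : (ℕ →₀ A) →+ R :=
  Finsupp.liftAddHom fun i => (AddMonoidHom.mulRight (t ^ i)).comp ι.toAddMonoidHom

theorem expandCoeffs_apply (ι : A →+* R) (t : R) (c : ℕ →₀ A) :
    expandCoeffs ι t c = c.sum fun i k => ι k * t ^ i :=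
  rfl

theorem expandCoeffs_single (ι : A →+* R) (t : R) (i : ℕ) (k : A) :
    expandCoeffs ι t (Finsupp.single i k) = ι k * t ^ i :=
  Finsupp.liftAddHom_apply_single _ _ _

theorem add_iota_mul_sub_iota {S : A →+* A} {D : A →+ A} {ι : A →+* R} {t : R}
    (hcomm : ∀ x : A, t * ι x = ι (S x) * t + ι (D x)) (w z : A) :
    (t + ι w) * (t - ι z) = t ^ 2 + ι (w - S z) * t + ι (-(D z + w * z)) := by
  rw [add_mul, mul_sub, mul_sub, hcomm, ← map_mul, map_sub, map_neg, map_add]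
  noncomm_ring

section RightEval

variable (S : A →+* A) (D : A →+ A) {ι : A →+* R} {t : R}
  (hfree : ∀ r : R, ∃! c : ℕ →₀ A, r = c.sum fun i k => ι k * t ^ i)

noncomputable def coeffEquiv : (ℕ →₀ A) ≃+ R :=
  AddEquiv.ofBijective (expandCoeffs ι t) <|
    (Function.bijective_iff_existsUnique _).2 fun r => by
      simpa only [expandCoeffs_apply, eq_comm (b := r)] using hfree r

/-- Right evaluation at `a`: the remainder of right division by `t - a`. -/
noncomputable def rightEval (a : A) : R →+ A :=
  (Finsupp.liftAddHom fun i =>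
      AddMonoidHom.mulRight ((pseudoLinearMap S D a)^[i] 1)).comp
    (coeffEquiv hfree).symm.toAddMonoidHom

variable {S D}

theorem rightEval_iota_mul_pow (a k : A) (i : ℕ) :
    rightEval S D hfree a (ι k * t ^ i) = k * (pseudoLinearMap S D a)^[i] 1 := by
  rw [← expandCoeffs_single]
  change Finsupp.liftAddHom _ ((coeffEquiv hfree).symm (coeffEquiv hfree _)) = _
  rw [AddEquiv.symm_apply_apply, Finsupp.liftAddHom_apply_single]
  rfl

theorem rightEval_iota (a x : A) : rightEval S D hfree a (ι x) = x := by
  simpa using rightEval_iota_mul_pow (S := S) (D := D) hfree a x 0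

theorem rightEval_t (hD : ∀ x y : A, D (x * y) = S x * D y + D x * y) (a : A) :
    rightEval S D hfree a t = a := by
  simpa [pseudoLinearMap_one hD] using rightEval_iota_mul_pow (S := S) (D := D) hfree a 1 1

theorem rightEval_iota_mul (a x : A) (r : R) :
    rightEval S D hfree a (ι x * r) = x * rightEval S D hfree a r := by
  have key : (rightEval S D hfree a).comp (AddMonoidHom.mulLeft (ι x)) =
      (AddMonoidHom.mulLeft x).comp (rightEval S D hfree a) :=
    addMonoidHom_ext_of_span (fun r => (hfree r).exists) fun i k => by
      simp only [AddMonoidHom.comp_apply, AddMonoidHom.coe_mulLeft, ← mul_assoc, ← map_mul,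
        rightEval_iota_mul_pow]
  exact DFunLike.congr_fun key r

theorem rightEval_t_mul (hD : ∀ x y : A, D (x * y) = S x * D y + D x * y)
    (hcomm : ∀ x : A, t * ι x = ι (S x) * t + ι (D x)) (a : A) (r : R) :
    rightEval S D hfree a (t * r) = pseudoLinearMap S D a (rightEval S D hfree a r) := by
  have key : (rightEval S D hfree a).comp (AddMonoidHom.mulLeft t) =
      (pseudoLinearMap S D a).comp (rightEval S D hfree a) := by
    refine addMonoidHom_ext_of_span (fun r => (hfree r).exists) fun i k => ?_
    have hmonomial : t * (ι k * t ^ i) = ι (S k) * t ^ (i + 1) + ι (D k) * t ^ i := by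
      rw [← mul_assoc, hcomm, add_mul, mul_assoc, ← pow_succ']
    simp only [AddMonoidHom.comp_apply, AddMonoidHom.coe_mulLeft, hmonomial, map_add,
      rightEval_iota_mul_pow, Function.iterate_succ_apply', pseudoLinearMap_apply, map_mul, hD]
    noncomm_ring
  exact DFunLike.congr_fun key r

theorem rightEval_pow_mul (hD : ∀ x y : A, D (x * y) = S x * D y + D x * y)
    (hcomm : ∀ x : A, t * ι x = ι (S x) * t + ι (D x)) (a : A) (i : ℕ) (r : R) :
    rightEval S D hfree a (t ^ i * r) = (pseudoLinearMap S D a)^[i] (rightEval S D hfree a r) := by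
  induction i with
  | zero => simp
  | succ i ih =>
    rw [pow_succ', mul_assoc, rightEval_t_mul hfree hD hcomm, ih,
      Function.iterate_succ_apply']

theorem rightEval_mul_eq_zero (hD : ∀ x y : A, D (x * y) = S x * D y + D x * y)
    (hcomm : ∀ x : A, t * ι x = ι (S x) * t + ι (D x)) {a : A} {s : R}
    (hs : rightEval S D hfree a s = 0) (r : R) : rightEval S D hfree a (r * s) = 0 := by
  have key : (rightEval S D hfree a).comp (AddMonoidHom.mulRight s) = 0 :=
    addMonoidHom_ext_of_span (fun r => (hfree r).exists) fun i k => by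
      simp only [AddMonoidHom.comp_apply, AddMonoidHom.coe_mulRight, AddMonoidHom.zero_apply,
        mul_assoc, rightEval_iota_mul, rightEval_pow_mul hfree hD hcomm, hs,
        iterate_map_zero, mul_zero]
  exact DFunLike.congr_fun key r

theorem rightEval_t_sub_iota (hD : ∀ x y : A, D (x * y) = S x * D y + D x * y) (a : A) :
    rightEval S D hfree a (t - ι a) = 0 := by
  rw [map_sub, rightEval_t hfree hD, rightEval_iota, sub_self]

theorem rightEval_eq_zero_of_mem_span (hD : ∀ x y : A, D (x * y) = S x * D y + D x * y)
    (hcomm : ∀ x : A, t * ι x = ι (S x) * t + ι (D x)) {a : A} {r : R}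
    (hr : r ∈ Ideal.span {t - ι a}) : rightEval S D hfree a r = 0 := by
  obtain ⟨q, rfl⟩ := Ideal.mem_span_singleton'.1 hr
  exact rightEval_mul_eq_zero hfree hD hcomm (rightEval_t_sub_iota hfree hD a) q

theorem rightEval_quadratic (hD : ∀ x y : A, D (x * y) = S x * D y + D x * y)
    (hcomm : ∀ x : A, t * ι x = ι (S x) * t + ι (D x)) (a e₀ e₁ : A) :
    rightEval S D hfree a (t ^ 2 + ι e₁ * t + ι e₀) = S a * a + D a + e₁ * a + e₀ := by
  rw [map_add, map_add, sq, rightEval_t_mul hfree hD hcomm, rightEval_iota_mul, rightEval_iota,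
    rightEval_t hfree hD, pseudoLinearMap_apply]

end RightEval

theorem quadratic_right_root_of_mem_span {S : A →+* A} {D : A →+ A} {ι : A →+* R} {t : R}
    (hfree : ∀ r : R, ∃! c : ℕ →₀ A, r = c.sum fun i k => ι k * t ^ i)
    (hD : ∀ x y : A, D (x * y) = S x * D y + D x * y)
    (hcomm : ∀ x : A, t * ι x = ι (S x) * t + ι (D x)) {a e₀ e₁ : A}
    (h : t ^ 2 + ι e₁ * t + ι e₀ ∈ Ideal.span {t - ι a}) : S a * a + D a + e₁ * a + e₀ = 0 := by
  rw [← rightEval_quadratic hfree hD hcomm, rightEval_eq_zero_of_mem_span hfree hD hcomm h]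

end OreExtension

/-- Characterization of rings admitting common left multiples of linear polynomials:
in `R = A[t;S,D]` (any ring `R` with `ι : A →+* R`, `t : R` satisfying the commutation
rule and such that every element of `R` is uniquely `Σ ι(cᵢ)tⁱ`), the following are
equivalent: (1) every pair `a, b` admits a monic degree-2 polynomial in
`R(t−a) ∩ R(t−b)`; (2) for all `r, b` there is `c` with `c·r = S(r)·b + D(r)`. -/
theorem monic_degree_two_iff {A R : Type*} [Ring A] [Ring R]
    (S : A →+* A) (D : A →+ A)
    (hD : ∀ x y : A, D (x * y) = S x * D y + D x * y)
    (ι : A →+* R) (t : R)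
    (hcomm : ∀ x : A, t * ι x = ι (S x) * t + ι (D x))
    (hfree : ∀ r : R, ∃! c : ℕ →₀ A, r = c.sum fun i k => ι k * t ^ i) :
    (∀ a b : A, ∃ e₀ e₁ : A,
        t ^ 2 + ι e₁ * t + ι e₀ ∈ Ideal.span {t - ι a} ⊓ Ideal.span {t - ι b}) ↔
      ∀ r b : A, ∃ c : A, c * r = S r * b + D r := by
  open OreExtension in
  constructor
  · intro h r b
    obtain ⟨e₀, e₁, hmem⟩ := h (r + b) b
    have hrb := quadratic_right_root_of_mem_span hfree hD hcomm hmem.1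
    have hb := quadratic_right_root_of_mem_span hfree hD hcomm hmem.2
    rw [map_add, map_add] at hrb
    refine ⟨-(S r + S b + e₁), ?_⟩
    calc -(S r + S b + e₁) * r
        = S r * b + D r - ((S r + S b) * (r + b) + (D r + D b) + e₁ * (r + b) + e₀ -
            (S b * b + D b + e₁ * b + e₀)) := by noncomm_ring
      _ = S r * b + D r := by rw [hrb, hb, sub_zero, sub_zero]
  · intro h a b
    obtain ⟨c, hc⟩ := h (a - b) b
    have hfactor (w z : A) :
        t ^ 2 + ι (w - S z) * t + ι (-(D z + w * z)) ∈ Ideal.span {t - ι z} :=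
      Ideal.mem_span_singleton'.2 ⟨t + ι w, add_iota_mul_sub_iota hcomm w z⟩
    have hcoeff : D b + (-c - S a + S b) * b = D a + -c * a := by
      rw [← sub_eq_zero]
      calc D b + (-c - S a + S b) * b - (D a + -c * a)
          = c * (a - b) - (S (a - b) * b + D (a - b)) := by
            rw [map_sub, map_sub]; noncomm_ring
        _ = 0 := by rw [hc, sub_self]
    have hb := hfactor (-c - S a + S b) b
    rw [add_sub_cancel_right, hcoeff] at hb
    exact ⟨-(D a + -c * a), -c - S a, Submodule.mem_inf.2 ⟨hfactor (-c) a, hb⟩⟩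
end

section
/- For an ordinary polynomial ring R = A[t] over a ring A (S = id, D = 0): every pair a, b ∈ A admits a monic common left multiple of degree 2 of t−a and t−b (i.e. there exist c,d ∈ A with (t−c)(t−a) = (t−d)(t−b)) if and only if A is left duo, i.e. every left ideal of A is a two-sided ideal (equivalently, for all r, b ∈ A, b·r ∈ A·r). -/
open Polynomial

lemma expand_aux {A : Type*} [Ring A] (c a : A) :
    (X - C c) * (X - C a) = X ^ 2 - C (c + a) * X + C (c * a) := by
  simp only [mul_sub, sub_mul, X_mul_C, C_add, C_mul, sq]
  noncomm_ring

lemma key_iff {A : Type*} [Ring A] (a b c d : A) :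
    (X - C c) * (X - C a) = (X - C d) * (X - C b) ↔ c + a = d + b ∧ c * a = d * b := by
  rw [expand_aux, expand_aux]
  constructor
  · intro h
    constructor
    · have h1 := congrArg (fun p => p.coeff 1) h
      simp [coeff_one, coeff_X] at h1
      have : -(c + a) = -(d + b) := by rw [neg_add, neg_add, add_comm, add_comm (-d)]; exact h1
      exact neg_injective this
    · have h0 := congrArg (fun p => p.coeff 0) h
      simpa using h0
  · rintro ⟨h1, h2⟩
    rw [h1, h2]

/-- For the ordinary polynomial ring `A[t]`: every pair `a, b ∈ A` admits a monic common
left multiple of degree 2 of `t−a` and `t−b` (i.e. `(t−c)(t−a) = (t−d)(t−b)` for some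
`c, d`) iff `A` is left duo, i.e. every left ideal of `A` is a two-sided ideal. -/
theorem common_left_multiple_iff_leftDuo {A : Type*} [Ring A] :
    (∀ a b : A, ∃ c d : A, (X - C c) * (X - C a) = (X - C d) * (X - C b)) ↔
      ∀ (I : Ideal A), ∀ r ∈ I, ∀ b : A, r * b ∈ I := by
  constructor
  · intro h I r hr b
    obtain ⟨c, d, hcd⟩ := h b (b + r)
    rw [key_iff] at hcd
    obtain ⟨h1, h2⟩ := hcd
    -- c = d + r
    have hc : c = d + r := by
      have h1' : c + b = d + r + b := by rw [h1]; abel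
      exact add_right_cancel h1'
    have : r * b = d * r := by
      have : (d + r) * b = d * (b + r) := hc ▸ h2
      have := this
      rw [add_mul, mul_add] at this
      exact add_left_cancel this
    rw [this]
    exact I.mul_mem_left d hr
  · intro h a b
    have hm : (b - a) * a ∈ Ideal.span {b - a} := h _ _ (Ideal.subset_span (Set.mem_singleton _)) a
    rw [Ideal.mem_span_singleton'] at hm
    obtain ⟨e, he⟩ := hm
    refine ⟨e + b - a, e, ?_⟩
    rw [key_iff]
    constructor
    · abel
    · calc (e + b - a) * a = e * a + (b - a) * a := by noncomm_ring
        _ = e * a + e * (b - a) := by rw [he]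
        _ = e * b := by noncomm_ring
end
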